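/- Let G be a finite simple graph, ab an edge of G, and let L_a ⊆ N(a)\{b} and L_b ⊆ N(b)\{a} be subsets such that each z ∈ N(a) ∩ N(b) satisfies z ∈ L_a ⇔ z ∈ L_b. Then for every λ ∈ Δ_{L_a,L_b} there exists an R-linear map φ^λ_{L_a,L_b} : K → R/I vanishing on K_0 such that φ^λ_{L_a,L_b}(r_{ab,ax}) = (−1)^{σ({ab,ax},ax)}·λ·x_x mod I for every x ∈ L_a, φ^λ_{L_a,L_b}(r_{ab,bx}) = (−1)^{σ({ab,bx},bx)}·λ·x_x mod I for every x ∈ L_b, and φ^λ_{L_a,L_b}(r_{e,e'}) = 0 for every other pair of distinct adjacent edges e, e'. -/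

import Mathlib

open MvPolynomial

noncomputable section

def edgeIdeal (k : Type*) [Field k] {V : Type*} (E : V → V → Prop) :
    Ideal (MvPolynomial V k) :=
  Ideal.span {m | ∃ a b, E a b ∧ m = X a * X b}

/-- The edge set of the graph, as a set of unordered pairs. -/
def edgeSet {V : Type*} {E : V → V → Prop} (hs : Symmetric E) : Set (Sym2 V) :=
  Sym2.fromRel (⟨fun _ _ h => hs h⟩ : Std.Symm E)

/-- The edge `{u,v}` as an element of the edge set. -/
def mkEdge {V : Type*} {E : V → V → Prop} (hs : Symmetric E) (u v : V) (h : E u v) :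
    edgeSet hs :=
  ⟨s(u, v), Sym2.fromRel_prop.mpr h⟩

/-- The monomial `x_u x_v` associated to the edge `{u,v}`. -/
def edgeMon (k : Type*) [Field k] {V : Type*} {E : V → V → Prop} (hs : Symmetric E)
    (e : edgeSet hs) : MvPolynomial V k :=
  Sym2.lift ⟨fun a b => X a * X b, fun a b => mul_comm _ _⟩ e.1

/-- The map `j : M → R` from the free module on the edges, `ε_{uv} ↦ x_u x_v`. -/
def jmap (k : Type*) [Field k] {V : Type*} {E : V → V → Prop} (hs : Symmetric E) :
    (edgeSet hs →₀ MvPolynomial V k) →ₗ[MvPolynomial V k] MvPolynomial V k :=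
  Finsupp.linearCombination (MvPolynomial V k) (edgeMon k hs)

/-- `K = ker j`, the module of relations between the generators of the edge ideal. -/
def Kmod (k : Type*) [Field k] {V : Type*} {E : V → V → Prop} (hs : Symmetric E) :
    Submodule (MvPolynomial V k) (edgeSet hs →₀ MvPolynomial V k) :=
  LinearMap.ker (jmap k hs)

/-- `K₀`, the submodule of Koszul relations `j(ε_e)·ε_{e'} − j(ε_{e'})·ε_e`. -/
def K0 (k : Type*) [Field k] {V : Type*} {E : V → V → Prop} (hs : Symmetric E) :
    Submodule (MvPolynomial V k) (edgeSet hs →₀ MvPolynomial V k) :=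
  Submodule.span (MvPolynomial V k)
    {z | ∃ e e' : edgeSet hs, e ≠ e' ∧
      z = edgeMon k hs e • Finsupp.single e' (1 : MvPolynomial V k)
        - edgeMon k hs e' • Finsupp.single e (1 : MvPolynomial V k)}

/-- For adjacent edges `uv` and `vw`, the relation `x_u·ε_{vw} − x_w·ε_{uv}` (equal to
`±r_{uv,vw}`), as an element of `K`. -/
def relK (k : Type*) [Field k] {V : Type*} {E : V → V → Prop} (hs : Symmetric E)
    (u v w : V) (h1 : E u v) (h2 : E v w) : Kmod k hs :=
  ⟨(X u : MvPolynomial V k) • Finsupp.single (mkEdge hs v w h2) (1 : MvPolynomial V k)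
      - (X w : MvPolynomial V k) • Finsupp.single (mkEdge hs u v h1) (1 : MvPolynomial V k), by
    simp only [Kmod, LinearMap.mem_ker, jmap]
    simp [Finsupp.smul_single, map_sub, edgeMon, mkEdge, Sym2.lift_mk]
    ring⟩

/-- `φ : K → R/I` vanishes on the Koszul relations `K₀`. -/
def VanishesOnK0 (k : Type*) [Field k] {V : Type*} {E : V → V → Prop} (hs : Symmetric E)
    (φ : Kmod k hs →ₗ[MvPolynomial V k] MvPolynomial V k ⧸ edgeIdeal k E) : Prop :=
  ∀ z : Kmod k hs, (z : edgeSet hs →₀ MvPolynomial V k) ∈ K0 k hs → φ z = 0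

/-- `T²(R/I) = 0`: every `R`-linear map `K → R/I` vanishing on `K₀` is the restriction
to `K` of an `R`-linear map `M → R/I`. -/
def T2Vanishes (k : Type*) [Field k] {V : Type*} {E : V → V → Prop} (hs : Symmetric E) : Prop :=
  ∀ φ : Kmod k hs →ₗ[MvPolynomial V k] MvPolynomial V k ⧸ edgeIdeal k E,
    VanishesOnK0 k hs φ →
    ∃ ψ : (edgeSet hs →₀ MvPolynomial V k) →ₗ[MvPolynomial V k]
        MvPolynomial V k ⧸ edgeIdeal k E,
      ∀ z : Kmod k hs, φ z = ψ z

open scoped Classical in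
/-- The neighborhood of a vertex. -/
def nbhd {V : Type*} [Fintype V] (E : V → V → Prop) (v : V) : Finset V :=
  Finset.univ.filter (fun w => E v w)


open scoped Classical in
/-- The set `Δ = Δ^a ∪ Δ^b` associated to the edge `ab` and the subsets
`L_a ⊆ N(a)\{b}` and `L_b ⊆ N(b)\{a}`: the vertices `u` of `(N(a)\{b}) \ L_a`
(resp. `(N(b)\{a}) \ L_b`) with `x_u x_y ∉ I` for some `y ∈ L_a ∪ L_b`. -/
def DeltaF (k : Type*) [Field k] {V : Type*} [Fintype V] [DecidableEq V]
    (E : V → V → Prop) (a b : V) (La Lb : Finset V) : Finset V :=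
  (((nbhd E a).erase b \ La).filter
      (fun u => ∃ y ∈ La ∪ Lb, (X u * X y : MvPolynomial V k) ∉ edgeIdeal k E)) ∪
  (((nbhd E b).erase a \ Lb).filter
      (fun u => ∃ y ∈ La ∪ Lb, (X u * X y : MvPolynomial V k) ∉ edgeIdeal k E))

open scoped Classical in
/-- The set `Δ_{L_a,L_b}` of squarefree monomials `√(∏_{u ∈ Δ} x_{c u})` over all choice
functions `c` with `c u ∈ Δ_u = N(u)\{a,b}` for every `u ∈ Δ`. -/
def DeltaSet (k : Type*) [Field k] {V : Type*} [Fintype V] [DecidableEq V]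
    (E : V → V → Prop) (a b : V) (La Lb : Finset V) : Set (MvPolynomial V k) :=
  {m | ∃ c : V → V,
    (∀ u ∈ DeltaF k E a b La Lb, c u ∈ nbhd E u \ {a, b}) ∧
    m = ∏ x ∈ (DeltaF k E a b La Lb).image c, X x}

/-- `φ : K → R/I` is the map `φ^λ_{L_a,L_b}`: it vanishes on `K₀`, sends
`r_{ab,ax} ↦ (−1)^{σ({ab,ax},ax)}·λ·x_x` for `x ∈ L_a`, sends
`r_{ab,bx} ↦ (−1)^{σ({ab,bx},bx)}·λ·x_x` for `x ∈ L_b`, and kills `r_{e,e'}` for every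
other pair of distinct adjacent edges.  (The element
`relK x a b = x_x·ε_{ab} − x_b·ε_{ax}` equals `(−1)^{σ({ab,ax},ax)}·r_{ab,ax}`, so the
signs are absorbed and the description below is independent of the total order `≺`.) -/
def IsT2Map (k : Type*) [Field k] {V : Type*} {E : V → V → Prop} (hs : Symmetric E)
    (a b : V) (La Lb : Finset V) (lam : MvPolynomial V k)
    (φ : Kmod k hs →ₗ[MvPolynomial V k] MvPolynomial V k ⧸ edgeIdeal k E) : Prop :=
  VanishesOnK0 k hs φ ∧
  (∀ x ∈ La, ∀ (h1 : E x a) (h2 : E a b),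
      φ (relK k hs x a b h1 h2) = Ideal.Quotient.mk (edgeIdeal k E) (lam * X x)) ∧
  (∀ x ∈ Lb, ∀ (h1 : E x b) (h2 : E b a),
      φ (relK k hs x b a h1 h2) = Ideal.Quotient.mk (edgeIdeal k E) (lam * X x)) ∧
  (∀ u v w (h1 : E u v) (h2 : E v w), u ≠ w →
    (∀ x ∈ La, ({s(u, v), s(v, w)} : Set (Sym2 V)) ≠ {s(a, b), s(a, x)}) →
    (∀ x ∈ Lb, ({s(u, v), s(v, w)} : Set (Sym2 V)) ≠ {s(a, b), s(b, x)}) →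
    φ (relK k hs u v w h1 h2) = 0)



section Statement12Aux

variable {k : Type*} [Field k] {V : Type*} [Fintype V] [DecidableEq V] {E : V → V → Prop}

/-- The exponent `d` involves a variable from `L`. -/
def PPred (L : Finset V) (d : V →₀ ℕ) : Prop := ∃ y ∈ L, d y ≠ 0

/-- Projection onto the span of monomials involving a variable from `L`. -/
def Theta (L : Finset V) (p : MvPolynomial V k) : MvPolynomial V k :=
  letI := Classical.decPred (PPred (V := V) L)
  AddMonoidAlgebra.ofCoeff (Finsupp.filter (PPred L) (AddMonoidAlgebra.coeff p))

lemma coeff_Theta_pos {L : Finset V} {d : V →₀ ℕ} (h : PPred L d) (p : MvPolynomial V k) :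
    coeff d (Theta L p) = coeff d p := by
  letI := Classical.decPred (PPred (V := V) L)
  show (Finsupp.filter (PPred L) (AddMonoidAlgebra.coeff p)) d = _
  rw [Finsupp.filter_apply, if_pos h]
  rfl

lemma coeff_Theta_neg {L : Finset V} {d : V →₀ ℕ} (h : ¬ PPred L d) (p : MvPolynomial V k) :
    coeff d (Theta L p) = 0 := by
  letI := Classical.decPred (PPred (V := V) L)
  show (Finsupp.filter (PPred L) (AddMonoidAlgebra.coeff p)) d = _
  rw [Finsupp.filter_apply, if_neg h]

lemma Theta_add (L : Finset V) (p q : MvPolynomial V k) :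
    Theta L (p + q) = Theta L p + Theta L q := by
  ext d
  by_cases h : PPred L d
  · simp only [coeff_Theta_pos h, coeff_add]
  · simp only [coeff_Theta_neg h, coeff_add, add_zero]

lemma Theta_zero (L : Finset V) : Theta L (0 : MvPolynomial V k) = 0 := by
  ext d
  by_cases h : PPred L d
  · simp only [coeff_Theta_pos h]
  · simp only [coeff_Theta_neg h, coeff_zero]

lemma Theta_neg (L : Finset V) (p : MvPolynomial V k) : Theta L (-p) = - Theta L p := by
  ext d
  by_cases h : PPred L d
  · simp only [coeff_Theta_pos h, coeff_neg]
  · simp only [coeff_Theta_neg h, coeff_neg, neg_zero]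

lemma Theta_X_of_mem {L : Finset V} {x : V} (hx : x ∈ L) :
    Theta L (X x : MvPolynomial V k) = X x := by
  ext d
  by_cases h : PPred L d
  · rw [coeff_Theta_pos h]
  · rw [coeff_Theta_neg h, coeff_X', if_neg]
    intro hd
    exact h ⟨x, hx, by rw [← hd]; simp⟩

lemma Theta_X_of_not_mem {L : Finset V} {x : V} (hx : x ∉ L) :
    Theta L (X x : MvPolynomial V k) = 0 := by
  ext d
  by_cases h : PPred L d
  · rw [coeff_Theta_pos h, coeff_zero, coeff_X', if_neg]
    intro hd
    obtain ⟨y, hyL, hdy⟩ := h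
    rw [← hd, Finsupp.single_apply] at hdy
    by_cases hxy : x = y
    · exact hx (hxy ▸ hyL)
    · simp [hxy] at hdy
  · rw [coeff_Theta_neg h, coeff_zero]

lemma Theta_monomial_mem (L : Finset V) (d : V →₀ ℕ) (r : k) :
    Theta L (monomial d r) = monomial d r ∨ Theta L (monomial d r) = 0 := by
  by_cases h : PPred L d
  · left; ext d'
    by_cases h' : PPred L d'
    · rw [coeff_Theta_pos h']
    · rw [coeff_Theta_neg h', coeff_monomial, if_neg]
      intro hdd
      exact h' (hdd ▸ h)
  · right; ext d'
    by_cases h' : PPred L d'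
    · rw [coeff_Theta_pos h', coeff_zero, coeff_monomial, if_neg]
      intro hdd
      exact h (by rw [hdd]; exact h')
    · rw [coeff_Theta_neg h', coeff_zero]

lemma Theta_eq_self {L : Finset V} {w : MvPolynomial V k} (h : ∀ d ∈ w.support, PPred L d) :
    Theta L w = w := by
  ext d
  by_cases hd : PPred L d
  · rw [coeff_Theta_pos hd]
  · rw [coeff_Theta_neg hd]
    by_cases h0 : coeff d w = 0
    · rw [h0]
    · exact absurd (h d (mem_support_iff.mpr h0)) hd

lemma PPred_mono {L : Finset V} {d d' : V →₀ ℕ} (h : PPred L d') (hle : d' ≤ d) : PPred L d := by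
  obtain ⟨y, hy, hne⟩ := h
  exact ⟨y, hy, by have := Finsupp.le_def.mp hle y; omega⟩

lemma edge_mem (u v : V) (h : E u v) : (X u * X v : MvPolynomial V k) ∈ edgeIdeal k E :=
  Ideal.subset_span ⟨u, v, h, rfl⟩

lemma X_mul_X_eq_monomial (u v : V) :
    (X u * X v : MvPolynomial V k)
      = monomial (Finsupp.single u 1 + Finsupp.single v 1) 1 := by
  show (monomial (Finsupp.single u 1) (1 : k)) * monomial (Finsupp.single v 1) 1 = _
  rw [monomial_mul, one_mul]

lemma support_edgeIdeal {p : MvPolynomial V k} (hp : p ∈ edgeIdeal k E) :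
    ∀ d ∈ p.support, ∃ u v, E u v ∧ Finsupp.single u 1 + Finsupp.single v 1 ≤ d := by
  refine Submodule.span_induction
    (p := fun q _ => ∀ d ∈ q.support,
      ∃ u v, E u v ∧ Finsupp.single u 1 + Finsupp.single v 1 ≤ d) ?_ ?_ ?_ ?_ hp
  · rintro q ⟨u, v, huv, rfl⟩ d hd
    rw [X_mul_X_eq_monomial, mem_support_iff, coeff_monomial] at hd
    refine ⟨u, v, huv, ?_⟩
    by_cases hdd : Finsupp.single u 1 + Finsupp.single v 1 = d
    · exact le_of_eq hdd
    · rw [if_neg hdd] at hd; exact absurd rfl hd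
  · intro d hd; simp at hd
  · intro q r _ _ hq hr d hd
    rw [mem_support_iff, coeff_add] at hd
    by_cases h : coeff d q = 0
    · refine hr d (mem_support_iff.mpr ?_)
      intro h'
      rw [h, h', add_zero] at hd
      exact hd rfl
    · exact hq d (mem_support_iff.mpr h)
  · intro c q _ hq d hd
    rw [smul_eq_mul, mem_support_iff, coeff_mul] at hd
    obtain ⟨x, hx, hne⟩ := Finset.exists_ne_zero_of_sum_ne_zero hd
    have h2 : coeff x.2 q ≠ 0 := fun h0 => hne (by rw [h0, mul_zero])
    obtain ⟨u, v, huv, hle⟩ := hq x.2 (mem_support_iff.mpr h2)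
    refine ⟨u, v, huv, hle.trans ?_⟩
    rw [← Finset.HasAntidiagonal.mem_antidiagonal.mp hx]
    exact le_add_self

lemma single_add_single_le {u v z y : V}
    (hle : Finsupp.single u 1 + Finsupp.single v 1
      ≤ (Finsupp.single z 1 + Finsupp.single y 1 : V →₀ ℕ)) :
    (u = z ∨ u = y) ∧ (v = z ∨ v = y) := by
  constructor
  · by_contra hcon
    push_neg at hcon
    have happ := Finsupp.le_def.mp hle u
    simp only [Finsupp.add_apply, Finsupp.single_apply] at happ
    rw [if_true, if_neg (fun h : z = u => hcon.1 h.symm),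
      if_neg (fun h : y = u => hcon.2 h.symm)] at happ
    split_ifs at happ <;> omega
  · by_contra hcon
    push_neg at hcon
    have happ := Finsupp.le_def.mp hle v
    simp only [Finsupp.add_apply, Finsupp.single_apply] at happ
    rw [if_true, if_neg (fun h : z = v => hcon.1 h.symm),
      if_neg (fun h : y = v => hcon.2 h.symm)] at happ
    split_ifs at happ <;> omega

lemma not_mem_edgeIdeal (hirr : ∀ v, ¬ E v v) {y z : V} (h1 : ¬ E z y) (h2 : ¬ E y z) :
    (X z * X y : MvPolynomial V k) ∉ edgeIdeal k E := by
  intro hmem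
  have hd : (Finsupp.single z 1 + Finsupp.single y 1)
      ∈ (X z * X y : MvPolynomial V k).support := by
    rw [X_mul_X_eq_monomial, mem_support_iff, coeff_monomial, if_pos rfl]
    exact one_ne_zero
  obtain ⟨u, v, huv, hle⟩ := support_edgeIdeal hmem _ hd
  have huv' : u ≠ v := fun h => hirr v (h ▸ huv)
  obtain ⟨hu, hv⟩ := single_add_single_le hle
  rcases hu with rfl | rfl <;> rcases hv with rfl | rfl
  · exact huv' rfl
  · exact h1 huv
  · exact h2 huv
  · exact huv' rfl

lemma mem_nbhd {u w : V} : w ∈ nbhd E u ↔ E u w := by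
  classical
  simp [nbhd]

lemma lam_mul_X_mem {a b : V} {La Lb : Finset V} {lam : MvPolynomial V k}
    (hlam : lam ∈ DeltaSet k E a b La Lb) {w : V} (hw : w ∈ DeltaF k E a b La Lb) :
    lam * X w ∈ edgeIdeal k E := by
  obtain ⟨c, hc, rfl⟩ := hlam
  have hcw := hc w hw
  rw [Finset.mem_sdiff] at hcw
  have hE : E w (c w) := mem_nbhd.mp hcw.1
  have hmem : c w ∈ (DeltaF k E a b La Lb).image c := Finset.mem_image_of_mem c hw
  rw [← Finset.mul_prod_erase _ _ hmem]
  have heq : X (c w) * (∏ x ∈ ((DeltaF k E a b La Lb).image c).erase (c w), (X x : MvPolynomial V k)) * X w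
      = (X w * X (c w)) * ∏ x ∈ ((DeltaF k E a b La Lb).image c).erase (c w), X x := by ring
  rw [heq]
  exact Ideal.mul_mem_right _ _ (edge_mem _ _ hE)

lemma mem_DeltaF (hirr : ∀ v, ¬ E v v) (hs : Symmetric E) {a b y w : V} {La Lb : Finset V}
    (hy : y ∈ La ∪ Lb) (hwL : w ∉ La ∪ Lb) (hw : E a w ∨ E b w) (hwa : w ≠ a) (hwb : w ≠ b)
    (hnot : ¬ E w y) : w ∈ DeltaF k E a b La Lb := by
  classical
  have hnot' : (X w * X y : MvPolynomial V k) ∉ edgeIdeal k E :=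
    not_mem_edgeIdeal hirr hnot (fun h => hnot (hs h))
  rw [DeltaF, Finset.mem_union]
  rcases hw with h | h
  · left
    rw [Finset.mem_filter, Finset.mem_sdiff, Finset.mem_erase]
    exact ⟨⟨⟨hwb, mem_nbhd.mpr h⟩, fun hla => hwL (Finset.mem_union_left _ hla)⟩, ⟨y, hy, hnot'⟩⟩
  · right
    rw [Finset.mem_filter, Finset.mem_sdiff, Finset.mem_erase]
    exact ⟨⟨⟨hwa, mem_nbhd.mpr h⟩, fun hlb => hwL (Finset.mem_union_right _ hlb)⟩, ⟨y, hy, hnot'⟩⟩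

lemma key_mem (hs : Symmetric E) (hirr : ∀ v, ¬ E v v) {a b : V} {La Lb : Finset V}
    {lam : MvPolynomial V k} (hlam : lam ∈ DeltaSet k E a b La Lb)
    {y w : V} (hy : y ∈ La ∪ Lb) (hw : E a w ∨ E b w) (hwa : w ≠ a) (hwb : w ≠ b)
    (hwL : w ∉ La ∪ Lb) : lam * (X y * X w) ∈ edgeIdeal k E := by
  by_cases hE : E w y
  · have : (X y * X w : MvPolynomial V k) ∈ edgeIdeal k E := by
      rw [mul_comm]; exact edge_mem _ _ hE
    exact Ideal.mul_mem_left _ _ this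
  · have hwD := mem_DeltaF (k := k) hirr hs hy hwL hw hwa hwb hE
    have h2 := lam_mul_X_mem (E := E) hlam hwD
    have heq : lam * (X y * X w) = (lam * X w) * X y := by ring
    rw [heq]
    exact Ideal.mul_mem_right _ _ h2

lemma mono_mem (hs : Symmetric E) (hirr : ∀ v, ¬ E v v) {a b : V} {La Lb : Finset V}
    {lam : MvPolynomial V k} (hlam : lam ∈ DeltaSet k E a b La Lb)
    {d d' : V →₀ ℕ} (r : k)
    (hPd : PPred (La ∪ Lb) d) (hle : d' ≤ d) (hPd' : ¬ PPred (La ∪ Lb) d')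
    (hB : (∃ u v, E u v ∧ Finsupp.single u 1 + Finsupp.single v 1 ≤ d') ∨
          (∃ w, d' w ≠ 0 ∧ (E a w ∨ E b w) ∧ w ≠ a ∧ w ≠ b)) :
    lam * monomial d r ∈ edgeIdeal k E := by
  rcases hB with ⟨u, v, huv, hle'⟩ | ⟨w, hwne, hEw, hwa, hwb⟩
  · set s := Finsupp.single u 1 + Finsupp.single v 1 with hs'
    have h1 : s ≤ d := hle'.trans hle
    have hmono : (monomial d r : MvPolynomial V k) = (X u * X v) * monomial (d - s) r := by
      rw [X_mul_X_eq_monomial, monomial_mul, one_mul, add_tsub_cancel_of_le h1]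
    rw [hmono, mul_left_comm]
    exact Ideal.mul_mem_right _ _ (edge_mem _ _ huv)
  · obtain ⟨y, hyL, hdy⟩ := hPd
    have hwL : w ∉ La ∪ Lb := fun hmem => hPd' ⟨w, hmem, hwne⟩
    have hyw : y ≠ w := fun h => hwL (h ▸ hyL)
    have hdw : d w ≠ 0 := by
      have := Finsupp.le_def.mp hle w; omega
    set s := Finsupp.single y 1 + Finsupp.single w 1 with hs'
    have h1 : s ≤ d := by
      rw [Finsupp.le_def]
      intro x
      rw [hs', Finsupp.add_apply, Finsupp.single_apply, Finsupp.single_apply]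
      by_cases hxy : y = x
      · rw [if_pos hxy, if_neg (fun h : w = x => hyw (hxy.trans h.symm))]
        have h5 : d x ≠ 0 := hxy ▸ hdy
        omega
      · rw [if_neg hxy]
        by_cases hxw : w = x
        · rw [if_pos hxw]
          have h5 : d x ≠ 0 := hxw ▸ hdw
          omega
        · rw [if_neg hxw]
          exact Nat.zero_le _
    have hmono : (monomial d r : MvPolynomial V k) = (X y * X w) * monomial (d - s) r := by
      rw [X_mul_X_eq_monomial, monomial_mul, one_mul, add_tsub_cancel_of_le h1]
    rw [hmono, ← mul_assoc]
    exact Ideal.mul_mem_right _ _ (key_mem hs hirr hlam hyL hEw hwa hwb hwL)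

lemma sym2_rep (x : Sym2 V) : ∃ u v, x = s(u, v) := by
  induction x using Sym2.ind with
  | _ u v => exact ⟨u, v, rfl⟩

lemma claimB (hs : Symmetric E) (hirr : ∀ v, ¬ E v v) {a b : V} (hab : E a b)
    {z : edgeSet hs →₀ MvPolynomial V k} (hz : z ∈ Kmod k hs) {d : V →₀ ℕ}
    (hd : coeff d (z (mkEdge hs a b hab)) ≠ 0) :
    (∃ u v, E u v ∧ Finsupp.single u 1 + Finsupp.single v 1 ≤ d) ∨
    (∃ w, d w ≠ 0 ∧ (E a w ∨ E b w) ∧ w ≠ a ∧ w ≠ b) := by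
  classical
  have hz0 : jmap k hs z = 0 := by
    simpa only [Kmod, LinearMap.mem_ker] using hz
  have hz1 : (∑ e ∈ z.support, z e • edgeMon k hs e) = 0 := by
    calc ∑ e ∈ z.support, z e • edgeMon k hs e
        = z.sum (fun e r => r • edgeMon k hs e) := rfl
      _ = jmap k hs z := (Finsupp.linearCombination_apply _ _).symm
      _ = 0 := hz0
  set eab := mkEdge hs a b hab with heab
  have hmem : eab ∈ z.support :=
    Finsupp.mem_support_iff.mpr (fun h0 => hd (by rw [h0, coeff_zero]))
  rw [← Finset.add_sum_erase _ _ hmem] at hz1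
  have hedge : edgeMon k hs eab = X a * X b := rfl
  have heq : z eab * (X a * X b)
      = - ∑ e ∈ z.support.erase eab, z e • edgeMon k hs e := by
    have h3 := eq_neg_of_add_eq_zero_left hz1
    rw [smul_eq_mul, hedge] at h3
    exact h3
  set D := d + (Finsupp.single a 1 + Finsupp.single b 1) with hD
  have hcoeffL : coeff D (z eab * (X a * X b)) = coeff d (z eab) := by
    rw [X_mul_X_eq_monomial, coeff_mul_monomial', if_pos le_add_self, hD,
      add_tsub_cancel_right, mul_one]
  have hR : coeff D (∑ e ∈ z.support.erase eab, z e • edgeMon k hs e) ≠ 0 := by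
    intro h0
    rw [heq, coeff_neg, h0, neg_zero] at hcoeffL
    exact hd hcoeffL.symm
  rw [coeff_sum] at hR
  obtain ⟨e, he, hne0⟩ := Finset.exists_ne_zero_of_sum_ne_zero hR
  have hene : e ≠ eab := (Finset.mem_erase.mp he).1
  obtain ⟨e1, he1⟩ := e
  obtain ⟨u, v, rfl⟩ := sym2_rep e1
  have hE : E u v := Sym2.fromRel_prop.mp he1
  have hune : u ≠ v := fun h => hirr v (h ▸ hE)
  have hsym : s(u, v) ≠ s(a, b) := fun h => hene (Subtype.ext h)
  have hmon : edgeMon k hs ⟨s(u, v), he1⟩ = X u * X v := rfl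
  rw [smul_eq_mul, hmon, X_mul_X_eq_monomial, coeff_mul_monomial'] at hne0
  have hle : Finsupp.single u 1 + Finsupp.single v 1 ≤ D := by
    by_contra hcon
    rw [if_neg hcon] at hne0
    exact hne0 rfl
  have hpt : ∀ x, Finsupp.single u 1 x + Finsupp.single v 1 x
      ≤ d x + (Finsupp.single a 1 x + Finsupp.single b 1 x) := by
    intro x
    have h4 := Finsupp.le_def.mp hle x
    rw [hD, Finsupp.add_apply, Finsupp.add_apply, Finsupp.add_apply] at h4
    exact h4
  by_cases hua : u = a
  · have hvb : v ≠ b := fun h => hsym (by rw [hua, h])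
    have hva : v ≠ a := fun h => hune (hua.trans h.symm)
    refine Or.inr ⟨v, ?_, Or.inl (by rw [← hua]; exact hE), hva, hvb⟩
    have h5 := hpt v
    rw [Finsupp.single_eq_same,
      Finsupp.single_eq_of_ne' (fun h : u = v => hune h),
      Finsupp.single_eq_of_ne' (fun h : a = v => hva h.symm),
      Finsupp.single_eq_of_ne' (fun h : b = v => hvb h.symm)] at h5
    omega
  · by_cases hub : u = b
    · have hva : v ≠ a := fun h => hsym (by rw [hub, h]; exact Sym2.eq_swap)
      have hvb : v ≠ b := fun h => hune (hub.trans h.symm)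
      refine Or.inr ⟨v, ?_, Or.inr (by rw [← hub]; exact hE), hva, hvb⟩
      have h5 := hpt v
      rw [Finsupp.single_eq_same,
        Finsupp.single_eq_of_ne' (fun h : u = v => hune h),
        Finsupp.single_eq_of_ne' (fun h : a = v => hva h.symm),
        Finsupp.single_eq_of_ne' (fun h : b = v => hvb h.symm)] at h5
      omega
    · by_cases hva : v = a
      · refine Or.inr ⟨u, ?_, Or.inl (hs (by rw [← hva]; exact hE)), hua, hub⟩
        have h5 := hpt u
        rw [Finsupp.single_eq_same,
          Finsupp.single_eq_of_ne' (fun h : v = u => hune h.symm),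
          Finsupp.single_eq_of_ne' (fun h : a = u => hua h.symm),
          Finsupp.single_eq_of_ne' (fun h : b = u => hub h.symm)] at h5
        omega
      · by_cases hvb : v = b
        · refine Or.inr ⟨u, ?_, Or.inr (hs (by rw [← hvb]; exact hE)), hua, hub⟩
          have h5 := hpt u
          rw [Finsupp.single_eq_same,
            Finsupp.single_eq_of_ne' (fun h : v = u => hune h.symm),
            Finsupp.single_eq_of_ne' (fun h : a = u => hua h.symm),
            Finsupp.single_eq_of_ne' (fun h : b = u => hub h.symm)] at h5
          omega
        · refine Or.inl ⟨u, v, hE, ?_⟩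
          rw [Finsupp.le_def]
          intro x
          rw [Finsupp.add_apply]
          have h5 := hpt x
          by_cases hxu : u = x
          · have e1 : Finsupp.single u (1 : ℕ) x = 1 := by
              rw [hxu]; exact Finsupp.single_eq_same
            have e2 : Finsupp.single v (1 : ℕ) x = 0 :=
              Finsupp.single_eq_of_ne' (fun h => hune (hxu.trans h.symm))
            have e3 : Finsupp.single a (1 : ℕ) x = 0 :=
              Finsupp.single_eq_of_ne' (fun h => hua (hxu.trans h.symm))
            have e4 : Finsupp.single b (1 : ℕ) x = 0 :=
              Finsupp.single_eq_of_ne' (fun h => hub (hxu.trans h.symm))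
            rw [e1, e2] at h5 ⊢
            rw [e3, e4] at h5
            omega
          · by_cases hxv : v = x
            · have e1 : Finsupp.single v (1 : ℕ) x = 1 := by
                rw [hxv]; exact Finsupp.single_eq_same
              have e2 : Finsupp.single u (1 : ℕ) x = 0 :=
                Finsupp.single_eq_of_ne' hxu
              have e3 : Finsupp.single a (1 : ℕ) x = 0 :=
                Finsupp.single_eq_of_ne' (fun h => hva (hxv.trans h.symm))
              have e4 : Finsupp.single b (1 : ℕ) x = 0 :=
                Finsupp.single_eq_of_ne' (fun h => hvb (hxv.trans h.symm))
              rw [e1, e2] at h5 ⊢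
              rw [e3, e4] at h5
              omega
            · rw [Finsupp.single_eq_of_ne' hxu, Finsupp.single_eq_of_ne' hxv]
              exact Nat.zero_le _

lemma theta_core (hs : Symmetric E) (hirr : ∀ v, ¬ E v v) {a b : V} (hab : E a b)
    {La Lb : Finset V} {lam : MvPolynomial V k} (hlam : lam ∈ DeltaSet k E a b La Lb)
    {z : edgeSet hs →₀ MvPolynomial V k} (hz : z ∈ Kmod k hs) (q : MvPolynomial V k) :
    lam * (Theta (La ∪ Lb) (q * z (mkEdge hs a b hab))
      - q * Theta (La ∪ Lb) (z (mkEdge hs a b hab))) ∈ edgeIdeal k E := by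
  classical
  set L := La ∪ Lb with hL
  set p := z (mkEdge hs a b hab) with hp
  set pL := Theta L p with hpL
  set pN := p - pL with hpN
  have hsupp_pN : ∀ d ∈ pN.support, ¬ PPred L d ∧ coeff d p ≠ 0 := by
    intro d hd
    rw [mem_support_iff, hpN, coeff_sub] at hd
    by_cases h : PPred L d
    · rw [hpL, coeff_Theta_pos h, sub_self] at hd; exact absurd rfl hd
    · rw [hpL, coeff_Theta_neg h, sub_zero] at hd; exact ⟨h, hd⟩
  have hTpN : ∀ d ∈ (Theta L (q * pN)).support,
      lam * monomial d (coeff d (Theta L (q * pN))) ∈ edgeIdeal k E := by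
    intro d hd
    rw [mem_support_iff] at hd
    have hPd : PPred L d := by
      by_contra h
      rw [coeff_Theta_neg h] at hd
      exact hd rfl
    rw [coeff_Theta_pos hPd] at hd ⊢
    rw [coeff_mul] at hd
    obtain ⟨x, hx, hne⟩ := Finset.exists_ne_zero_of_sum_ne_zero hd
    have h2 : coeff x.2 pN ≠ 0 := fun h0 => hne (by rw [h0, mul_zero])
    obtain ⟨hP2, hp2⟩ := hsupp_pN x.2 (mem_support_iff.mpr h2)
    have hle : x.2 ≤ d := by
      rw [← Finset.HasAntidiagonal.mem_antidiagonal.mp hx]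
      exact le_add_self
    exact mono_mem hs hirr hlam _ hPd hle hP2 (claimB hs hirr hab hz hp2)
  have hmul : lam * Theta L (q * pN) ∈ edgeIdeal k E := by
    have hAs : lam * Theta L (q * pN)
        = ∑ d ∈ (Theta L (q * pN)).support,
            lam * monomial d (coeff d (Theta L (q * pN))) := by
      conv_lhs => rw [as_sum (Theta L (q * pN))]
      rw [Finset.mul_sum]
    rw [hAs]
    exact Submodule.sum_mem _ hTpN
  have hqp : q * p = q * pL + q * pN := by
    rw [← mul_add, hpN]
    ring_nf
  have hthL : Theta L (q * pL) = q * pL := by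
    apply Theta_eq_self
    intro d hd
    rw [mem_support_iff, coeff_mul] at hd
    obtain ⟨x, hx, hne⟩ := Finset.exists_ne_zero_of_sum_ne_zero hd
    have h2 : coeff x.2 pL ≠ 0 := fun h0 => hne (by rw [h0, mul_zero])
    have hP2 : PPred L x.2 := by
      by_contra h
      rw [hpL, coeff_Theta_neg h] at h2
      exact h2 rfl
    refine PPred_mono hP2 ?_
    rw [← Finset.HasAntidiagonal.mem_antidiagonal.mp hx]
    exact le_add_self
  have hsplit : Theta L (q * p) - q * pL = Theta L (q * pN) := by
    rw [hqp, Theta_add, hthL]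
    ring
  rw [hsplit]
  exact hmul

lemma lam_Theta_edgeMon (hs : Symmetric E) (L : Finset V) (lam : MvPolynomial V k)
    (f : edgeSet hs) : lam * Theta L (edgeMon k hs f) ∈ edgeIdeal k E := by
  obtain ⟨f1, hf1⟩ := f
  obtain ⟨u, v, rfl⟩ := sym2_rep f1
  have hE : E u v := Sym2.fromRel_prop.mp hf1
  have hmon : edgeMon k hs ⟨s(u, v), hf1⟩ = X u * X v := rfl
  rw [hmon, X_mul_X_eq_monomial]
  rcases Theta_monomial_mem L (Finsupp.single u 1 + Finsupp.single v 1) (1 : k) with h | h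
  · rw [h, ← X_mul_X_eq_monomial]
    exact Ideal.mul_mem_left _ _ (edge_mem _ _ hE)
  · rw [h, mul_zero]
    exact Ideal.zero_mem _

lemma koszul_mem_Kmod (hs : Symmetric E) (e e' : edgeSet hs) :
    edgeMon k hs e • Finsupp.single e' (1 : MvPolynomial V k)
      - edgeMon k hs e' • Finsupp.single e 1 ∈ Kmod k hs := by
  have hone : ∀ f : edgeSet hs,
      jmap k hs (Finsupp.single f (1 : MvPolynomial V k)) = edgeMon k hs f := by
    intro f
    show Finsupp.linearCombination _ (edgeMon k hs) (Finsupp.single f 1) = _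
    rw [Finsupp.linearCombination_single, one_smul]
  simp only [Kmod, LinearMap.mem_ker, map_sub, map_smul, hone, smul_eq_mul]
  rw [mul_comm, sub_self]

lemma smul_mk (q x : MvPolynomial V k) :
    q • (Ideal.Quotient.mk (edgeIdeal k E) x) = Ideal.Quotient.mk (edgeIdeal k E) (q * x) := by
  rw [← Ideal.Quotient.mk_eq_mk, ← Ideal.Quotient.mk_eq_mk, ← Submodule.Quotient.mk_smul,
    smul_eq_mul]

end Statement12Aux

/-- For a finite simple graph `G`, an edge `ab`, and subsets
`L_a ⊆ N(a)\{b}`, `L_b ⊆ N(b)\{a}` compatible on `N(a) ∩ N(b)`, every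
`λ ∈ Δ_{L_a,L_b}` gives rise to an `R`-linear map `φ^λ_{L_a,L_b} : K → R/I` vanishing on
`K₀` with the prescribed values on the relations `r_{ab,ax}` (`x ∈ L_a`), `r_{ab,bx}`
(`x ∈ L_b`), and vanishing on all other relations of adjacent pairs of edges. -/
theorem statement12 {k : Type*} [Field k] {V : Type*} [Fintype V] [DecidableEq V]
    {E : V → V → Prop} (hs : Symmetric E) (hirr : ∀ v, ¬ E v v)
    (a b : V) (hab : E a b) (La Lb : Finset V)
    (hLa : La ⊆ (nbhd E a).erase b) (hLb : Lb ⊆ (nbhd E b).erase a)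
    (hcompat : ∀ z, E a z → E b z → (z ∈ La ↔ z ∈ Lb))
    (lam : MvPolynomial V k) (hlam : lam ∈ DeltaSet k E a b La Lb) :
    ∃ φ : Kmod k hs →ₗ[MvPolynomial V k] MvPolynomial V k ⧸ edgeIdeal k E,
      IsT2Map k hs a b La Lb lam φ := by
  classical
  refine ⟨{
      toFun := fun z => Ideal.Quotient.mk (edgeIdeal k E)
        (lam * Theta (La ∪ Lb)
          ((z : edgeSet hs →₀ MvPolynomial V k) (mkEdge hs a b hab)))
      map_add' := ?_
      map_smul' := ?_ }, ?_, ?_, ?_, ?_⟩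
  · intro z z'
    have hco : ((z + z' : Kmod k hs) : edgeSet hs →₀ MvPolynomial V k) (mkEdge hs a b hab)
        = (z : edgeSet hs →₀ MvPolynomial V k) (mkEdge hs a b hab)
          + (z' : edgeSet hs →₀ MvPolynomial V k) (mkEdge hs a b hab) := rfl
    rw [hco, Theta_add, mul_add, RingHom.map_add]
  · intro q z
    dsimp only [RingHom.id_apply]
    have hco : ((q • z : Kmod k hs) : edgeSet hs →₀ MvPolynomial V k) (mkEdge hs a b hab)
        = q * (z : edgeSet hs →₀ MvPolynomial V k) (mkEdge hs a b hab) := rfl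
    rw [hco]
    rw [smul_mk, Ideal.Quotient.eq]
    have hcore := theta_core hs hirr hab hlam z.2 q
    have heq : lam * Theta (La ∪ Lb)
          (q * (z : edgeSet hs →₀ MvPolynomial V k) (mkEdge hs a b hab))
        - q * (lam * Theta (La ∪ Lb)
          ((z : edgeSet hs →₀ MvPolynomial V k) (mkEdge hs a b hab)))
        = lam * (Theta (La ∪ Lb)
          (q * (z : edgeSet hs →₀ MvPolynomial V k) (mkEdge hs a b hab))
        - q * Theta (La ∪ Lb)
          ((z : edgeSet hs →₀ MvPolynomial V k) (mkEdge hs a b hab))) := by ring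
    rw [heq]
    exact hcore
  -- VanishesOnK0
  · intro z hz0
    show Ideal.Quotient.mk (edgeIdeal k E)
      (lam * Theta (La ∪ Lb)
        ((z : edgeSet hs →₀ MvPolynomial V k) (mkEdge hs a b hab))) = 0
    rw [Ideal.Quotient.eq_zero_iff_mem]
    have main : (z : edgeSet hs →₀ MvPolynomial V k) ∈ Kmod k hs ∧
        lam * Theta (La ∪ Lb)
          ((z : edgeSet hs →₀ MvPolynomial V k) (mkEdge hs a b hab)) ∈ edgeIdeal k E := by
      refine Submodule.span_induction
        (p := fun w _ => w ∈ Kmod k hs ∧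
          lam * Theta (La ∪ Lb) (w (mkEdge hs a b hab)) ∈ edgeIdeal k E)
        ?_ ?_ ?_ ?_ hz0
      · rintro w ⟨e, e', hne, rfl⟩
        refine ⟨koszul_mem_Kmod hs e e', ?_⟩
        rw [Finsupp.sub_apply, Finsupp.smul_apply, Finsupp.smul_apply,
          Finsupp.single_apply, Finsupp.single_apply, smul_eq_mul, smul_eq_mul]
        by_cases h1 : e' = mkEdge hs a b hab <;> by_cases h2 : e = mkEdge hs a b hab
        · exact absurd (h2.trans h1.symm) hne
        · rw [if_pos h1, if_neg h2, mul_one, mul_zero, sub_zero]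
          exact lam_Theta_edgeMon hs _ lam e
        · rw [if_neg h1, if_pos h2, mul_zero, mul_one, zero_sub,
            Theta_neg, mul_neg]
          exact Submodule.neg_mem _ (lam_Theta_edgeMon hs _ lam e')
        · rw [if_neg h1, if_neg h2, mul_zero, mul_zero, sub_zero,
            Theta_zero, mul_zero]
          exact Ideal.zero_mem _
      · refine ⟨Submodule.zero_mem _, ?_⟩
        rw [Finsupp.zero_apply, Theta_zero, mul_zero]
        exact Ideal.zero_mem _
      · intro w1 w2 _ _ h1 h2
        refine ⟨Submodule.add_mem _ h1.1 h2.1, ?_⟩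
        rw [Finsupp.add_apply, Theta_add, mul_add]
        exact Submodule.add_mem _ h1.2 h2.2
      · intro q w _ hw
        refine ⟨Submodule.smul_mem _ _ hw.1, ?_⟩
        rw [Finsupp.smul_apply, smul_eq_mul]
        have hcore := theta_core hs hirr hab hlam hw.1 q
        have heq : lam * Theta (La ∪ Lb) (q * w (mkEdge hs a b hab))
            = lam * (Theta (La ∪ Lb) (q * w (mkEdge hs a b hab))
                - q * Theta (La ∪ Lb) (w (mkEdge hs a b hab)))
              + q * (lam * Theta (La ∪ Lb) (w (mkEdge hs a b hab))) := by
          ring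
        rw [heq]
        exact Submodule.add_mem _ hcore (Ideal.mul_mem_left _ _ hw.2)
    exact main.2
  -- values on r_{ab,ax}, x ∈ La
  · intro x hx h1 h2
    have hval : ((relK k hs x a b h1 h2 : Kmod k hs) :
          edgeSet hs →₀ MvPolynomial V k) (mkEdge hs a b hab) = X x := by
      show (((X x : MvPolynomial V k) • Finsupp.single (mkEdge hs a b h2)
          (1 : MvPolynomial V k)
        - (X b : MvPolynomial V k) • Finsupp.single (mkEdge hs x a h1) 1 :
          edgeSet hs →₀ MvPolynomial V k))
          (mkEdge hs a b hab) = X x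
      rw [Finsupp.sub_apply, Finsupp.smul_apply, Finsupp.smul_apply,
        Finsupp.single_apply, Finsupp.single_apply, smul_eq_mul, smul_eq_mul]
      have hxb : x ≠ b := (Finset.mem_erase.mp (hLa hx)).1
      have hc2 : mkEdge hs x a h1 ≠ mkEdge hs a b hab := by
        intro h
        have h' : s(x, a) = s(a, b) := congrArg Subtype.val h
        rcases Sym2.eq_iff.mp h' with ⟨-, h''⟩ | ⟨h'', -⟩
        · exact hirr b (h'' ▸ hab)
        · exact hxb h''
      rw [if_pos (Subtype.ext rfl), if_neg hc2, mul_one, mul_zero, sub_zero]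
    show Ideal.Quotient.mk (edgeIdeal k E)
      (lam * Theta (La ∪ Lb)
        (((relK k hs x a b h1 h2 : Kmod k hs) :
          edgeSet hs →₀ MvPolynomial V k) (mkEdge hs a b hab))) = _
    rw [hval, Theta_X_of_mem (Finset.mem_union_left _ hx)]
  -- values on r_{ab,bx}, x ∈ Lb
  · intro x hx h1 h2
    have hval : ((relK k hs x b a h1 h2 : Kmod k hs) :
          edgeSet hs →₀ MvPolynomial V k) (mkEdge hs a b hab) = X x := by
      show (((X x : MvPolynomial V k) • Finsupp.single (mkEdge hs b a h2)
          (1 : MvPolynomial V k)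
        - (X a : MvPolynomial V k) • Finsupp.single (mkEdge hs x b h1) 1 :
          edgeSet hs →₀ MvPolynomial V k))
          (mkEdge hs a b hab) = X x
      rw [Finsupp.sub_apply, Finsupp.smul_apply, Finsupp.smul_apply,
        Finsupp.single_apply, Finsupp.single_apply, smul_eq_mul, smul_eq_mul]
      have hxa : x ≠ a := (Finset.mem_erase.mp (hLb hx)).1
      have hc2 : mkEdge hs x b h1 ≠ mkEdge hs a b hab := by
        intro h
        have h' : s(x, b) = s(a, b) := congrArg Subtype.val h
        rcases Sym2.eq_iff.mp h' with ⟨h'', -⟩ | ⟨-, h''⟩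
        · exact hxa h''
        · exact hirr b (h'' ▸ hab)
      rw [if_pos (Subtype.ext Sym2.eq_swap), if_neg hc2, mul_one, mul_zero, sub_zero]
    show Ideal.Quotient.mk (edgeIdeal k E)
      (lam * Theta (La ∪ Lb)
        (((relK k hs x b a h1 h2 : Kmod k hs) :
          edgeSet hs →₀ MvPolynomial V k) (mkEdge hs a b hab))) = _
    rw [hval, Theta_X_of_mem (Finset.mem_union_right _ hx)]
  -- vanishing on the other relations
  · intro u v w h1 h2 huw hna hnb
    have hval : ((relK k hs u v w h1 h2 : Kmod k hs) :
          edgeSet hs →₀ MvPolynomial V k) (mkEdge hs a b hab)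
        = (if s(v, w) = s(a, b) then (X u : MvPolynomial V k) else 0)
          - (if s(u, v) = s(a, b) then (X w : MvPolynomial V k) else 0) := by
      show (((X u : MvPolynomial V k) • Finsupp.single (mkEdge hs v w h2)
          (1 : MvPolynomial V k)
        - (X w : MvPolynomial V k) • Finsupp.single (mkEdge hs u v h1) 1 :
          edgeSet hs →₀ MvPolynomial V k))
          (mkEdge hs a b hab) = _
      rw [Finsupp.sub_apply, Finsupp.smul_apply, Finsupp.smul_apply,
        Finsupp.single_apply, Finsupp.single_apply, smul_eq_mul, smul_eq_mul]
      by_cases hc1 : s(v, w) = s(a, b) <;> by_cases hc2 : s(u, v) = s(a, b)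
      · rw [if_pos (Subtype.ext hc1), if_pos (Subtype.ext hc2), if_pos hc1, if_pos hc2,
          mul_one, mul_one]
      · rw [if_pos (Subtype.ext hc1),
          if_neg (fun h => hc2 (congrArg Subtype.val h)), if_pos hc1, if_neg hc2,
          mul_one, mul_zero]
      · rw [if_neg (fun h => hc1 (congrArg Subtype.val h)), if_pos (Subtype.ext hc2),
          if_neg hc1, if_pos hc2, mul_one, mul_zero]
      · rw [if_neg (fun h => hc1 (congrArg Subtype.val h)),
          if_neg (fun h => hc2 (congrArg Subtype.val h)), if_neg hc1, if_neg hc2,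
          mul_zero, mul_zero]
    show Ideal.Quotient.mk (edgeIdeal k E)
      (lam * Theta (La ∪ Lb)
        (((relK k hs u v w h1 h2 : Kmod k hs) :
          edgeSet hs →₀ MvPolynomial V k) (mkEdge hs a b hab))) = 0
    rw [hval]
    by_cases hc1 : s(v, w) = s(a, b) <;> by_cases hc2 : s(u, v) = s(a, b)
    · exfalso
      rcases Sym2.eq_iff.mp (hc2.trans hc1.symm) with ⟨h3, h4⟩ | ⟨h3, -⟩
      · exact huw (h3.trans h4)
      · exact huw h3
    · -- value X u, u ∉ La ∪ Lb
      have hu : u ∉ La ∪ Lb := by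
        intro humem
        rcases Sym2.eq_iff.mp hc1 with ⟨hv, hw⟩ | ⟨hv, hw⟩
        · -- v = a, w = b
          have h1' : E u a := by rw [← hv]; exact h1
          have hA : u ∈ La := by
            rcases Finset.mem_union.mp humem with hA | hB
            · exact hA
            · have hEbu : E b u := mem_nbhd.mp
                (Finset.mem_erase.mp (hLb hB)).2
              exact (hcompat u (hs h1') hEbu).mpr hB
          refine hna u hA ?_
          rw [hv, hw, show s(u, a) = s(a, u) from Sym2.eq_swap, Set.pair_comm]
        · -- v = b, w = a
          have h1' : E u b := by rw [← hv]; exact h1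
          have hB : u ∈ Lb := by
            rcases Finset.mem_union.mp humem with hA | hB
            · have hEau : E a u := mem_nbhd.mp
                (Finset.mem_erase.mp (hLa hA)).2
              exact (hcompat u hEau (hs h1')).mp hA
            · exact hB
          refine hnb u hB ?_
          rw [hv, hw, show s(u, b) = s(b, u) from Sym2.eq_swap,
            show s(b, a) = s(a, b) from Sym2.eq_swap, Set.pair_comm]
      rw [if_pos hc1, if_neg hc2, sub_zero,
        Theta_X_of_not_mem hu, mul_zero, map_zero]
    · -- value -X w, w ∉ La ∪ Lb
      have hw' : w ∉ La ∪ Lb := by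
        intro hwmem
        rcases Sym2.eq_iff.mp hc2 with ⟨hu', hv'⟩ | ⟨hu', hv'⟩
        · -- u = a, v = b
          have h2' : E b w := by rw [← hv']; exact h2
          have hB : w ∈ Lb := by
            rcases Finset.mem_union.mp hwmem with hA | hB
            · have hEaw : E a w := mem_nbhd.mp
                (Finset.mem_erase.mp (hLa hA)).2
              exact (hcompat w hEaw h2').mp hA
            · exact hB
          exact hnb w hB (by rw [hu', hv'])
        · -- u = b, v = a
          have h2' : E a w := by rw [← hv']; exact h2
          have hA : w ∈ La := by
            rcases Finset.mem_union.mp hwmem with hA | hB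
            · exact hA
            · have hEbw : E b w := mem_nbhd.mp
                (Finset.mem_erase.mp (hLb hB)).2
              exact (hcompat w h2' hEbw).mpr hB
          refine hna w hA ?_
          rw [hu', hv', show s(b, a) = s(a, b) from Sym2.eq_swap]
      rw [if_neg hc1, if_pos hc2, zero_sub, Theta_neg,
        Theta_X_of_not_mem hw', neg_zero, mul_zero, map_zero]
    · rw [if_neg hc1, if_neg hc2, sub_zero, Theta_zero, mul_zero, map_zero]

end
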